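/- arXiv:1601.06456 — 8 statements merged into one kernel-verified Lean document; each statement's English description precedes it below -/
import Mathlib

section
/- For any finite alphabet A with |A| ≥ 2 and any n ≥ 1, there exists a cyclic universal word for A^n, i.e., a cyclic word of length |A|^n over A in which every word of length n over A appears exactly once as a cyclic subword. -/
/-!
A cyclic universal word for `A^(p+1)` is read off an Eulerian circuit of the De Bruijn graph,
whose vertices are the words of length `p` and whose edges are the words `w` of length `p + 1`,
going from the prefix of `w` to its suffix: take the first letter of every edge of the circuit.
The De Bruijn graph is balanced (rotating a word by one letter trades its prefix for its suffix)
and strongly connected (shift in the letters of the target one at a time). In such a graph a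
longest trail is an Eulerian circuit: by balance, a trail that does not end where it starts can be
extended at its end, and by connectivity a closed trail that misses an edge leaves one of its
vertices along an unused edge, so it can be rotated to start there and extended.
-/

/-- `v` appears as a (contiguous) subword of `u` at 0-based position `i`. -/
def WordMatchAt {α : ℕ} (u v : List (Fin α)) (i : ℕ) : Prop :=
  i + v.length ≤ u.length ∧ ∀ j < v.length, u[i + j]? = v[j]?

/-- `u` is a linear universal word for `A^n`, `A = Fin α`: every word of length `n`
appears exactly once as a contiguous subword. -/
def IsLinearUniversal (α n : ℕ) (u : List (Fin α)) : Prop :=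
  ∀ v : List (Fin α), v.length = n → ∃! i : ℕ, WordMatchAt u v i

/-- `v` appears as a cyclic subword of `u` starting at position `i` (indices mod `u.length`). -/
def CycWordMatchAt {α : ℕ} (u v : List (Fin α)) (i : ℕ) : Prop :=
  ∀ j < v.length, u[(i + j) % u.length]? = v[j]?

/-- `u` is a cyclic universal word for `A^n`: every word of length `n` appears exactly once
as a cyclic subword. -/
def IsCyclicUniversal (α n : ℕ) (u : List (Fin α)) : Prop :=
  ∀ v : List (Fin α), v.length = n → ∃! i : ℕ, i < u.length ∧ CycWordMatchAt u v i

open Finset Relation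

section Eulerian

variable {V E : Type*} (src tgt : E → V)

def IsWalk : V → List E → V → Prop
  | v, [], w => v = w
  | v, e :: l, w => src e = v ∧ IsWalk (tgt e) l w

def IsEulerianCircuit (l : List E) : Prop :=
  l.Nodup ∧ (∀ e, e ∈ l) ∧
    ∀ i (hi : i < l.length), tgt l[i] = src (l[(i + 1) % l.length]'(Nat.mod_lt _ (by omega)))

def Adj (x y : V) : Prop := ∃ e, src e = x ∧ tgt e = y

variable {src tgt}

@[simp] theorem isWalk_nil {v w : V} : IsWalk src tgt v [] w ↔ v = w := Iff.rfl

@[simp] theorem isWalk_cons {v w : V} {e : E} {l : List E} :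
    IsWalk src tgt v (e :: l) w ↔ src e = v ∧ IsWalk src tgt (tgt e) l w := Iff.rfl

theorem isWalk_append {v w : V} {l₁ l₂ : List E} :
    IsWalk src tgt v (l₁ ++ l₂) w ↔
      ∃ u, IsWalk src tgt v l₁ u ∧ IsWalk src tgt u l₂ w := by
  induction l₁ generalizing v with
  | nil => simp
  | cons e l ih => simp only [List.cons_append, isWalk_cons, ih]; grind

namespace IsWalk

variable {v w : V} {l : List E}

theorem rotate {e : E} {l₁ l₂ : List E} (h : IsWalk src tgt v (l₁ ++ e :: l₂) v) :
    IsWalk src tgt (src e) (e :: (l₂ ++ l₁)) (src e) := by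
  obtain ⟨u, h₁, h₂⟩ := isWalk_append.1 h
  obtain ⟨rfl, h₃⟩ := isWalk_cons.1 h₂
  exact isWalk_append.2 ⟨v, isWalk_cons.2 ⟨rfl, h₃⟩, h₁⟩

theorem exists_src_eq_tgt (h : IsWalk src tgt v l v) {e : E} (he : e ∈ l) :
    ∃ f ∈ l, src f = tgt e := by
  obtain ⟨l₁, l₂, rfl⟩ := List.append_of_mem he
  obtain ⟨-, hrest⟩ := h.rotate
  cases hl : l₂ ++ l₁ with
  | nil => exact ⟨e, he, by rw [hl, isWalk_nil] at hrest; exact hrest.symm⟩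
  | cons f l' =>
    have hf : f ∈ l₂ ++ l₁ := by simp [hl]
    refine ⟨f, by simp only [List.mem_append, List.mem_cons] at hf ⊢; tauto, ?_⟩
    rw [hl, isWalk_cons] at hrest
    exact hrest.1

theorem countP_tgt_add [DecidableEq V] (h : IsWalk src tgt v l w) (x : V) :
    l.countP (tgt · = x) + (if v = x then 1 else 0)
      = l.countP (src · = x) + (if w = x then 1 else 0) := by
  induction l generalizing v with
  | nil => rw [isWalk_nil.1 h]; simp
  | cons e l ih =>
    have := ih h.2
    simp only [List.countP_cons, decide_eq_true_eq, ← h.1]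
    split_ifs at * <;> omega

theorem tgt_getElem_eq_src_getElem_succ (h : IsWalk src tgt v l w) (i : ℕ)
    (hi : i + 1 < l.length) : tgt l[i] = src l[i + 1] := by
  induction l generalizing v i with
  | nil => simp at hi
  | cons e l ih =>
    cases i with
    | zero =>
      obtain ⟨f, l', rfl⟩ := List.exists_cons_of_length_pos (by simpa using hi)
      exact h.2.1.symm
    | succ i => exact ih h.2 i (by simpa using hi)

theorem tgt_getLast (h : IsWalk src tgt v l w) (hl : l ≠ []) : tgt (l.getLast hl) = w := by
  induction l generalizing v with
  | nil => simp at hl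
  | cons e l ih =>
    cases l with
    | nil => exact h.2
    | cons f l' => exact ih h.2 (List.cons_ne_nil f l')

theorem isEulerianCircuit (h : IsWalk src tgt v l v) (hl : l.Nodup) (hall : ∀ e, e ∈ l) :
    IsEulerianCircuit src tgt l := by
  refine ⟨hl, hall, fun i hi => ?_⟩
  by_cases hi' : i + 1 < l.length
  · simp only [Nat.mod_eq_of_lt hi']
    exact h.tgt_getElem_eq_src_getElem_succ i hi'
  · have hne : l ≠ [] := List.ne_nil_of_length_pos (by omega)
    obtain ⟨e, l', rfl⟩ := List.exists_cons_of_ne_nil hne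
    have hlast := h.tgt_getLast hne
    rw [List.getLast_eq_getElem] at hlast
    have hi : i = l'.length := by simp at hi hi'; omega
    subst hi
    simpa [h.1] using hlast

theorem exists_notMem_src_mem
    (hconn : ∀ e f, ReflTransGen (Adj src tgt) (src e) (src f))
    (h : IsWalk src tgt v l v) (hne : l ≠ []) {f : E} (hf : f ∉ l) :
    ∃ g ∉ l, ∃ e ∈ l, src g = src e := by
  by_contra! hall
  obtain ⟨e, he⟩ := List.exists_mem_of_ne_nil l hne
  -- Otherwise the sources of the edges of `l` are closed under following edges.
  have hreach : ∀ y, ReflTransGen (Adj src tgt) (src e) y →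
      ∃ e' ∈ l, src e' = y := by
    intro y hy
    induction hy with
    | refl => exact ⟨e, he, rfl⟩
    | tail _ hxy ih =>
      obtain ⟨g, rfl, rfl⟩ := hxy
      obtain ⟨e', he', hsrc⟩ := ih
      have hg : g ∈ l := by_contra fun hg => hall g hg e' he' hsrc.symm
      exact h.exists_src_eq_tgt hg
  obtain ⟨e', he', hsrc⟩ := hreach _ (hconn e f)
  exact hall f hf e' he' hsrc.symm

end IsWalk

variable [DecidableEq V] [Fintype E] [DecidableEq E]

namespace IsWalk

variable {v w : V} {l : List E}

theorem exists_notMem_src_eq_of_ne (hbal : ∀ x, #{e | src e = x} = #{e | tgt e = x})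
    (h : IsWalk src tgt v l w) (hl : l.Nodup) (hvw : v ≠ w) : ∃ e ∉ l, src e = w := by
  by_contra! hall
  have hout : #{e | src e = w} ≤ l.countP (src · = w) := by
    rw [← hl.card_eq_countP]
    exact card_le_card fun e he => by
      simp only [mem_filter, mem_univ, true_and, List.mem_toFinset] at he ⊢
      exact ⟨by_contra fun hel => hall e hel he, he⟩
  have hin : l.countP (tgt · = w) ≤ #{e | tgt e = w} := by
    rw [← hl.card_eq_countP]
    exact card_le_card fun e he => by simp_all
  have hcount := h.countP_tgt_add w
  simp only [hvw, if_false, if_true, add_zero] at hcount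
  have := hbal w
  omega

theorem exists_longer (hbal : ∀ x, #{e | src e = x} = #{e | tgt e = x})
    (hconn : ∀ e f, ReflTransGen (Adj src tgt) (src e) (src f))
    (h : IsWalk src tgt v l w) (hl : l.Nodup) (hmiss : v ≠ w ∨ ∃ f, f ∉ l) :
    ∃ v' l' w', IsWalk src tgt v' l' w' ∧ l'.Nodup ∧ l.length < l'.length := by
  by_cases hvw : v = w
  · subst hvw
    obtain ⟨f, hf⟩ := hmiss.resolve_left (not_not.2 rfl)
    obtain rfl | hne := eq_or_ne l []
    · exact ⟨src f, [f], tgt f, by simp, List.nodup_singleton f, by simp⟩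
    obtain ⟨g, hg, e, he, hge⟩ := h.exists_notMem_src_mem hconn hne hf
    obtain ⟨l₁, l₂, rfl⟩ := List.append_of_mem he
    have hperm : (e :: (l₂ ++ l₁)).Perm (l₁ ++ e :: l₂) := by
      simpa using (List.perm_append_comm (l₁ := l₁) (l₂ := e :: l₂)).symm
    refine ⟨src e, e :: (l₂ ++ l₁) ++ [g], tgt g,
      isWalk_append.2 ⟨src e, h.rotate, by simp [hge]⟩, ?_, by simp; omega⟩
    rw [← List.concat_eq_append]
    exact (hperm.nodup_iff.2 hl).concat (by rwa [hperm.mem_iff])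
  · obtain ⟨e, he, rfl⟩ := h.exists_notMem_src_eq_of_ne hbal hl hvw
    refine ⟨v, l ++ [e], tgt e, isWalk_append.2 ⟨src e, h, by simp⟩, ?_, by simp⟩
    rw [← List.concat_eq_append]
    exact hl.concat he

theorem exists_isEulerianCircuit (hbal : ∀ x, #{e | src e = x} = #{e | tgt e = x})
    (hconn : ∀ e f, ReflTransGen (Adj src tgt) (src e) (src f))
    {v w : V} {l : List E} (h : IsWalk src tgt v l w) (hl : l.Nodup) :
    ∃ c, IsEulerianCircuit src tgt c := by
  induction hn : Fintype.card E - l.length using Nat.strong_induction_on generalizing v l w with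
  | _ n ih =>
  by_cases hc : v = w ∧ ∀ e, e ∈ l
  · obtain ⟨rfl, hall⟩ := hc
    exact ⟨l, h.isEulerianCircuit hl hall⟩
  · rw [not_and_or, not_forall] at hc
    obtain ⟨v', l', w', h', hl', hlt⟩ := h.exists_longer hbal hconn hl hc
    have := hl'.length_le_card
    exact ih _ (by omega) h' hl' rfl

end IsWalk

theorem exists_isEulerianCircuit (hbal : ∀ x, #{e | src e = x} = #{e | tgt e = x})
    (hconn : ∀ e f, ReflTransGen (Adj src tgt) (src e) (src f)) :
    ∃ c, IsEulerianCircuit src tgt c := by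
  cases isEmpty_or_nonempty E with
  | inl => exact ⟨[], List.nodup_nil, isEmptyElim, by simp⟩
  | inr hE =>
    obtain ⟨e⟩ := hE
    exact IsWalk.exists_isEulerianCircuit hbal hconn (isWalk_nil.2 (rfl : src e = src e))
      List.nodup_nil

end Eulerian

section DeBruijn

variable {A : Type*} {p : ℕ}

theorem List.tail_rotate_of_length_eq_succ {l : List A} (hl : l.length = p + 1) :
    (l.rotate p).tail = l.dropLast := by
  obtain ⟨l', b, rfl⟩ : ∃ l' b, l = l' ++ [b] :=
    ⟨l.dropLast, l.getLast (List.ne_nil_of_length_eq_add_one hl),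
      (List.dropLast_append_getLast _).symm⟩
  obtain rfl : l'.length = p := by simpa using hl
  simp [List.rotate_append_length_eq]

theorem List.dropLast_rotate_one {l : List A} : (l.rotate 1).dropLast = l.tail := by
  cases l with
  | nil => simp
  | cons a l => simp [List.rotate_cons_succ]

theorem reflTransGen_deBruijn_drop_length_append {x : List A} (hx : x.length = p) (z : List A) :
    ReflTransGen
      (Adj (fun w : List.Vector A (p + 1) => w.toList.dropLast) fun w => w.toList.tail)
      x ((x ++ z).drop z.length) := by
  induction z generalizing x with
  | nil => simpa using ReflTransGen.refl
  | cons b z ih =>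
    refine ReflTransGen.head (b := (x ++ [b]).tail)
      ⟨⟨x ++ [b], by simp [hx]⟩, List.dropLast_concat, rfl⟩ ?_
    have hdrop : (x ++ b :: z).drop (z.length + 1) = ((x ++ [b]).tail ++ z).drop z.length := by
      rw [← List.tail_append_of_ne_nil (by simp), List.drop_tail]
      simp
    simpa only [List.length_cons, hdrop] using ih (x := (x ++ [b]).tail) (by simp [hx])

theorem reflTransGen_deBruijn (e f : List.Vector A (p + 1)) :
    ReflTransGen
      (Adj (fun w : List.Vector A (p + 1) => w.toList.dropLast) fun w => w.toList.tail)
      e.toList.dropLast f.toList.dropLast := by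
  simpa [List.drop_left'] using
    reflTransGen_deBruijn_drop_length_append (x := e.toList.dropLast) (by simp) f.toList.dropLast

theorem List.Vector.getElem?_toList_zero (w : List.Vector A (p + 1)) :
    w.toList[0]? = some w.head := by
  obtain ⟨_ | ⟨a, l⟩, hl⟩ := w
  · simp at hl
  · rfl

theorem getElem?_map_head_add_mod {es : List (List.Vector A (p + 1))}
    (hes : ∀ i (hi : i < es.length), es[i].toList.tail
      = (es[(i + 1) % es.length]'(Nat.mod_lt _ (by omega))).toList.dropLast)
    {i j : ℕ} (hi : i < es.length) (hj : j ≤ p) :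
    (es.map List.Vector.head)[(i + j) % es.length]? = es[i].toList[j]? := by
  induction j generalizing i with
  | zero =>
    rw [Nat.add_zero, Nat.mod_eq_of_lt hi, List.getElem?_map, List.getElem?_eq_getElem hi,
      List.Vector.getElem?_toList_zero]
    rfl
  | succ j ih =>
    have hmod : (i + (j + 1)) % es.length = ((i + 1) % es.length + j) % es.length := by
      rw [Nat.mod_add_mod, Nat.add_right_comm, Nat.add_assoc]
    have hj' : (es[(i + 1) % es.length]'(Nat.mod_lt _ (by omega))).toList[j]?
        = (es[(i + 1) % es.length]'(Nat.mod_lt _ (by omega))).toList.dropLast[j]? := by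
      rw [List.getElem?_dropLast, if_pos (by simp; omega)]
    rw [hmod, ih (Nat.mod_lt _ (by omega)) (by omega), hj', ← hes i hi, List.getElem?_tail]

variable [Fintype A] [DecidableEq A]

theorem card_filter_dropLast_eq_card_filter_tail (x : List A) :
    #{w : List.Vector A (p + 1) | w.toList.dropLast = x}
      = #{w : List.Vector A (p + 1) | w.toList.tail = x} := by
  have rotate_rotate {w : List.Vector A (p + 1)} {m k : ℕ} (h : m + k = p + 1) :
      (w.toList.rotate m).rotate k = w.toList := by
    have := List.rotate_length w.toList
    rw [List.Vector.toList_length] at this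
    rw [List.rotate_rotate, h, this]
  refine card_nbij' (fun w => (⟨w.toList.rotate p, by simp⟩ : List.Vector A (p + 1)))
    (fun w => (⟨w.toList.rotate 1, by simp⟩ : List.Vector A (p + 1))) ?_ ?_ ?_ ?_
  · intro w hw
    simp only [coe_filter, mem_univ, true_and, Set.mem_ofPred_eq] at hw ⊢
    exact (List.tail_rotate_of_length_eq_succ w.toList_length).trans hw
  · intro w hw
    simp only [coe_filter, mem_univ, true_and, Set.mem_ofPred_eq] at hw ⊢
    exact List.dropLast_rotate_one.trans hw
  · intro w _
    exact List.Vector.toList_injective (rotate_rotate (by omega))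
  · intro w _
    exact List.Vector.toList_injective (rotate_rotate (by omega))

end DeBruijn

theorem cycWordMatchAt_map_head_iff {α p : ℕ} {es : List (List.Vector (Fin α) (p + 1))}
    (hes : ∀ i (hi : i < es.length), es[i].toList.tail
      = (es[(i + 1) % es.length]'(Nat.mod_lt _ (by omega))).toList.dropLast)
    {i : ℕ} (hi : i < es.length) (w : List.Vector (Fin α) (p + 1)) :
    CycWordMatchAt (es.map List.Vector.head) w.toList i ↔ es[i] = w := by
  simp only [CycWordMatchAt, List.length_map, List.Vector.toList_length]
  constructor
  · intro h
    refine List.Vector.toList_injective (List.ext_getElem? fun j => ?_)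
    by_cases hj : j < p + 1
    · rw [← h j hj, getElem?_map_head_add_mod hes hi (by omega)]
    · rw [List.getElem?_eq_none (by simp; omega), List.getElem?_eq_none (by simp; omega)]
  · rintro rfl j hj
    exact getElem?_map_head_add_mod hes hi (by omega)

theorem cyclic_universal_word_exists_general (α n : ℕ) (hn : 1 ≤ n) :
    ∃ u : List (Fin α), u.length = α ^ n ∧ IsCyclicUniversal α n u := by
  obtain ⟨p, rfl⟩ : ∃ p, n = p + 1 := ⟨n - 1, by omega⟩
  obtain ⟨es, hnd, hall, hchain⟩ := exists_isEulerianCircuit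
    (card_filter_dropLast_eq_card_filter_tail (A := Fin α) (p := p)) reflTransGen_deBruijn
  have hlen : es.length = α ^ (p + 1) := by
    rw [← List.toFinset_card_of_nodup hnd,
      eq_univ_of_forall (s := es.toFinset) (by simpa using hall), card_univ, card_vector,
      Fintype.card_fin]
  refine ⟨es.map List.Vector.head, by simp [hlen], fun v hv => ?_⟩
  obtain ⟨i, hi, hiv⟩ := List.getElem_of_mem (hall ⟨v, hv⟩)
  refine ⟨i, ⟨by simpa using hi, (cycWordMatchAt_map_head_iff hchain hi _).2 hiv⟩, ?_⟩
  rintro j ⟨hj, hmatch⟩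
  rw [List.length_map] at hj
  exact hnd.getElem_inj_iff.1
    (((cycWordMatchAt_map_head_iff hchain hj ⟨v, hv⟩).1 hmatch).trans hiv.symm)

/-- For any finite alphabet `A` with `|A| ≥ 2` and any `n ≥ 1`, there exists
a cyclic universal word for `A^n`: a word of length `|A|^n` in which every word of length `n`
appears exactly once as a cyclic subword. -/
theorem cyclic_universal_word_exists (α n : ℕ) (hα : 2 ≤ α) (hn : 1 ≤ n) :
    ∃ u : List (Fin α), u.length = α ^ n ∧ IsCyclicUniversal α n u :=
  cyclic_universal_word_exists_general α n hn
end

section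
/- Let u = u_1 u_2 ⋯ u_N be a linear universal partial word for A^n over A = {0,1,…,α-1} with n ≥ 2, such that u_k = ◊ and u_{k+n} ≠ ◊ (with k + n ≤ N). Then for every i = 1,2,…,n-1, if u_i ≠ ◊ then u_{k+i} = u_i. Moreover, if u_n ≠ ◊ then α = 2 and u_{k+n} is the complement of u_n. -/
/-- A partial-word symbol over the alphabet `Fin α`: `none` is the wildcard `◊`. -/
abbrev PSym (α : ℕ) := Option (Fin α)

/-- The word `v ∈ A^*` appears as a factor of the partial word `u` at 0-based position `i`:
each symbol of `u` in the window is either `◊` or equals the corresponding letter of `v`. -/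
def MatchAt {α : ℕ} (u : List (PSym α)) (v : List (Fin α)) (i : ℕ) : Prop :=
  i + v.length ≤ u.length ∧
    ∀ j < v.length, u[i + j]? = some none ∨ u[i + j]? = (v[j]?).map some

/-- `u` is a linear universal partial word (upword) for `A^n`, `A = Fin α`:
every word of length `n` over `A` appears exactly once as a factor. -/
def IsLinearUpword (α n : ℕ) (u : List (PSym α)) : Prop :=
  ∀ v : List (Fin α), v.length = n → ∃! i : ℕ, MatchAt u v i

/-- `v` appears as a cyclic factor of the partial word `u` at position `i`
(indices taken modulo `u.length`). -/
def CycMatchAt {α : ℕ} (u : List (PSym α)) (v : List (Fin α)) (i : ℕ) : Prop :=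
  ∀ j < v.length,
    u[(i + j) % u.length]? = some none ∨ u[(i + j) % u.length]? = (v[j]?).map some

/-- `u` is a cyclic universal partial word for `A^n`: every word of length `n` over `A`
appears exactly once as a cyclic factor. -/
def IsCyclicUpword (α n : ℕ) (u : List (PSym α)) : Prop :=
  ∀ v : List (Fin α), v.length = n → ∃! i : ℕ, i < u.length ∧ CycMatchAt u v i

/-!
Let `t` be any filling of the `n - 1` symbols after the wildcard `u_k`, and `b` a letter other
than `u_{k+n}`. The word `t b` occurs somewhere in `u`. Were it at a position `p > 1`, then `c t`
would occur at `p - 1` for a letter `c` compatible with `u_{p-1}`; but `c t` also occurs at `k`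
thanks to the wildcard, so `p = k + 1`, and then `b = u_{k+n}`. Hence `t b` is a prefix of `u`
for all such `t` and `b`: varying `t` at a wildcard gives the first claim, varying `b` the second.
-/

section PartialWord

variable {α : ℕ}

def AdmitsAt (u : List (PSym α)) (i : ℕ) (c : Fin α) : Prop :=
  u[i]? = some none ∨ u[i]? = some (some c)

theorem AdmitsAt.eq {u : List (PSym α)} {i : ℕ} {c x : Fin α} (h : AdmitsAt u i c)
    (hx : u[i]? = some (some x)) : c = x := by
  rcases h with h | h <;> simp_all

theorem exists_eq_some_some_of_ne_wildcard {u : List (PSym α)} {i : ℕ} (hi : i < u.length)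
    (h : u[i]? ≠ some none) : ∃ x : Fin α, u[i]? = some (some x) := by
  rw [List.getElem?_eq_getElem hi] at h ⊢
  obtain ⟨x, hx⟩ := Option.ne_none_iff_exists'.mp (fun he => h (congrArg some he))
  exact ⟨x, congrArg some hx⟩

theorem exists_admitsAt {u : List (PSym α)} {i : ℕ} (hi : i < u.length) (a : Fin α) :
    ∃ c, AdmitsAt u i c := by
  by_cases h : u[i]? = some none
  · exact ⟨a, Or.inl h⟩
  · obtain ⟨x, hx⟩ := exists_eq_some_some_of_ne_wildcard hi h
    exact ⟨x, Or.inr hx⟩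

theorem matchAt_cons {u : List (PSym α)} {c : Fin α} {t : List (Fin α)} {i : ℕ} :
    MatchAt u (c :: t) i ↔ AdmitsAt u i c ∧ MatchAt u t (i + 1) := by
  simp only [MatchAt, AdmitsAt, List.length_cons, Nat.forall_lt_succ_left,
    List.getElem?_cons_zero, List.getElem?_cons_succ, Option.map_some, Nat.add_zero,
    ← Nat.add_assoc, Nat.add_right_comm i 1]
  tauto

theorem matchAt_append_singleton {u : List (PSym α)} {t : List (Fin α)} {b : Fin α} {i : ℕ} :
    MatchAt u (t ++ [b]) i ↔ MatchAt u t i ∧ AdmitsAt u (i + t.length) b := by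
  have hprefix : ∀ m < t.length, (t ++ [b])[m]? = t[m]? := fun m hm =>
    List.getElem?_append_left hm
  simp only [MatchAt, AdmitsAt, List.length_append, List.length_singleton,
    Nat.forall_lt_succ_right, List.getElem?_concat_length, Option.map_some]
  constructor
  · rintro ⟨hlen, hinit, hlast⟩
    exact ⟨⟨by omega, fun m hm => hprefix m hm ▸ hinit m hm⟩, hlast⟩
  · rintro ⟨⟨hlen, hinit⟩, hlast⟩
    have : i + t.length < u.length := by
      by_contra hge
      rw [List.getElem?_eq_none (by omega)] at hlast
      simp at hlast
    exact ⟨by omega, fun m hm => (hprefix m hm).symm ▸ hinit m hm, hlast⟩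

def fillWindow (u : List (PSym α)) (i m : ℕ) (c : Fin α) : List (Fin α) :=
  List.ofFn fun j : Fin m => (u[i + j]?.join).getD c

@[simp]
theorem length_fillWindow (u : List (PSym α)) (i m : ℕ) (c : Fin α) :
    (fillWindow u i m c).length = m :=
  List.length_ofFn

theorem matchAt_fillWindow {u : List (PSym α)} {i m : ℕ} (h : i + m ≤ u.length) (c : Fin α) :
    MatchAt u (fillWindow u i m c) i := by
  refine ⟨by simpa using h, fun j hj => ?_⟩
  rw [length_fillWindow] at hj
  obtain ⟨s, hs⟩ : ∃ s, u[i + j]? = some s := ⟨_, List.getElem?_eq_getElem (by omega)⟩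
  cases s <;> simp [fillWindow, hj, hs]

theorem eq_of_matchAt_fillWindow {u : List (PSym α)} {i m p j : ℕ} {c x : Fin α}
    (h : MatchAt u (fillWindow u i m c) p) (hj : j < m) (hx : u[p + j]? = some (some x))
    (hcx : c ≠ x) : u[i + j]? = some (some x) := by
  have hfill : (u[i + j]?.join).getD c = x := by
    rcases h.2 j (by simpa using hj) with h | h <;> simp_all [fillWindow]
  rw [← Option.join_eq_some_iff]
  cases hij : u[i + j]?.join <;> simp_all

theorem IsLinearUpword.matchAt_zero_of_wildcard {n K : ℕ} {u : List (PSym α)}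
    {t : List (Fin α)} {a b : Fin α} (hu : IsLinearUpword α n u) (ht : t.length + 1 = n)
    (hK : u[K]? = some none) (ha : u[K + 1 + t.length]? = some (some a))
    (htK : MatchAt u t (K + 1)) (hb : b ≠ a) : MatchAt u (t ++ [b]) 0 := by
  obtain ⟨p, hp, -⟩ := hu (t ++ [b]) (by simpa using ht)
  rcases p with _ | q
  · exact hp
  obtain ⟨htq, hb'⟩ := matchAt_append_singleton.1 hp
  obtain ⟨c, hc⟩ := exists_admitsAt (u := u) (i := q) (by have := htq.1; omega) a
  have hqK : q = K := (hu (c :: t) (by simpa using ht)).unique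
    (matchAt_cons.2 ⟨hc, htq⟩) (matchAt_cons.2 ⟨Or.inl hK, htK⟩)
  subst hqK
  exact absurd (hb'.eq ha) hb

end PartialWord

theorem upword_constraint_general (α n N k : ℕ) (hα : 2 ≤ α)
    (u : List (PSym α)) (hN : u.length = N)
    (hu : IsLinearUpword α n u)
    (hk1 : 1 ≤ k) (hkn : k + n ≤ N)
    (hk : u[k - 1]? = some none)
    (hknd : u[k + n - 1]? ≠ some none) :
    (∀ i, 1 ≤ i → i ≤ n - 1 → u[i - 1]? ≠ some none → u[k + i - 1]? = u[i - 1]?) ∧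
    (u[n - 1]? ≠ some none →
      α = 2 ∧ ∀ x : Fin α, u[n - 1]? = some (some x) →
        ∃ y : Fin α, y ≠ x ∧ u[k + n - 1]? = some (some y)) := by
  subst hN
  have : Nontrivial (Fin α) := Fin.nontrivial_iff_two_le.mpr hα
  obtain ⟨K, rfl⟩ : ∃ K, k = K + 1 := ⟨k - 1, by omega⟩
  obtain ⟨m, rfl⟩ : ∃ m, n = m + 1 :=
    Nat.exists_eq_add_one_of_ne_zero (by rintro rfl; exact hknd hk)
  rw [Nat.add_sub_cancel] at hk
  rw [show K + 1 + (m + 1) - 1 = K + 1 + m by omega] at hknd ⊢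
  obtain ⟨a, ha⟩ := exists_eq_some_some_of_ne_wildcard (by omega) hknd
  have hprefix (c b : Fin α) (hb : b ≠ a) : MatchAt u (fillWindow u (K + 1) m c ++ [b]) 0 :=
    hu.matchAt_zero_of_wildcard (by simp) hk (by simpa using ha)
      (matchAt_fillWindow (by omega) c) hb
  obtain ⟨b₀, hb₀⟩ := exists_ne a
  refine ⟨fun i hi1 hi2 hui => ?_, fun hun => ?_⟩
  · obtain ⟨x, hx⟩ := exists_eq_some_some_of_ne_wildcard (by omega) hui
    obtain ⟨c, hc⟩ := exists_ne x
    rw [hx, show K + 1 + i - 1 = K + 1 + (i - 1) by omega]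
    exact eq_of_matchAt_fillWindow (matchAt_append_singleton.1 (hprefix c b₀ hb₀)).1 (by omega)
      (by simpa using hx) hc
  · obtain ⟨x, hx⟩ := exists_eq_some_some_of_ne_wildcard (by omega) hun
    have hbx (b : Fin α) (hb : b ≠ a) : b = x :=
      (matchAt_append_singleton.1 (hprefix b₀ b hb)).2.eq (by simpa using hx)
    have hcard : Fintype.card (Fin α) ≤ 2 := by
      refine (Finset.card_le_card (s := Finset.univ) (t := {a, x}) fun b _ => ?_).trans
        Finset.card_le_two
      rcases eq_or_ne b a with rfl | hb
      · simp
      · simp [hbx b hb]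
    refine ⟨by rw [Fintype.card_fin] at hcard; omega, fun x' hx' => ⟨a, ?_, ha⟩⟩
    rw [hx] at hx'
    cases hx'
    exact fun hax => hb₀ (hax ▸ hbx b₀ hb₀)

/-- constraint lemma; indices are 1-based as in the paper.
Let `u = u_1 ⋯ u_N` be a linear upword for `A^n`, `A = {0,…,α-1}`, `n ≥ 2`, with `u_k = ◊`
and `u_{k+n} ≠ ◊` (where `k + n ≤ N`). Then for all `i = 1,…,n-1`, if `u_i ≠ ◊` then
`u_{k+i} = u_i`; moreover, if `u_n ≠ ◊` then `α = 2` and `u_{k+n}` is the complement of `u_n`. -/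
theorem upword_constraint (α n N k : ℕ) (hα : 2 ≤ α) (hn : 2 ≤ n)
    (u : List (PSym α)) (hN : u.length = N)
    (hu : IsLinearUpword α n u)
    (hk1 : 1 ≤ k) (hkn : k + n ≤ N)
    (hk : u[k - 1]? = some none)
    (hknd : u[k + n - 1]? ≠ some none) :
    (∀ i, 1 ≤ i → i ≤ n - 1 → u[i - 1]? ≠ some none → u[k + i - 1]? = u[i - 1]?) ∧
    (u[n - 1]? ≠ some none →
      α = 2 ∧ ∀ x : Fin α, u[n - 1]? = some (some x) →
        ∃ y : Fin α, y ≠ x ∧ u[k + n - 1]? = some (some y)) :=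
  upword_constraint_general α n N k hα u hN hu hk1 hkn hk hknd
end

section
/- For any alphabet A = {0,1,…,α-1} with α ≥ 3 and any n ≥ 2, there is no linear universal partial word for A^n containing exactly one ◊. -/
/-!
Let the only `◊` of `u` sit at position `p`. A word of length `n` is determined by the window
where it occurs and by its letter under the `◊`, so `α ^ n ≤ (#windows) * (α + 1)`; as
`n * (α + 1) < α ^ n`, `u` has length at least `2 * n`.

Up to reversal, `◊` is followed by `n - 1` letters forming a word `v`. Every `c v` occurs at `p`,
so `v` occurs only at `0` or `p + 1`: a letter `c` just before another occurrence would give a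
second occurrence of `c v`. Each of the `α ≥ 3` words `v c` therefore occurs at `0` or `p + 1`,
two of them at the same place, and the cell after that occurrence of `v` fits two letters, so it
is the `◊`. Hence `u` starts with `v ◊ v e` for a letter `e`, and `v e` occurs twice.
-/

theorem List.exists_getElem?_eq_some_iff_of_count_eq_one {β : Type*} [BEq β] [LawfulBEq β]
    {l : List β} {a : β} (h : l.count a = 1) : ∃ p, ∀ q : ℕ, l[q]? = some a ↔ q = p := by
  obtain ⟨s, t, rfl⟩ := List.append_of_mem (List.count_pos_iff.1 (by omega : 0 < l.count a))
  rw [List.count_append, List.count_cons_self] at h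
  have hs : a ∉ s := List.count_eq_zero.1 (by omega)
  have ht : a ∉ t := List.count_eq_zero.1 (by omega)
  refine ⟨s.length, fun q => ?_⟩
  rcases lt_trichotomy q s.length with hq | rfl | hq
  · rw [List.getElem?_append_left hq]
    exact iff_of_false (fun h => hs (List.mem_of_getElem? h)) hq.ne
  · simp
  · obtain ⟨k, rfl⟩ := Nat.exists_eq_add_of_lt hq
    rw [List.getElem?_append_right hq.le, show s.length + k + 1 - s.length = k + 1 by omega]
    exact iff_of_false (fun h => ht (List.mem_of_getElem? h)) (by omega)

theorem Nat.mul_add_one_lt_pow {a n : ℕ} (ha : 3 ≤ a) (hn : 2 ≤ n) : n * (a + 1) < a ^ n := by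
  induction n, hn using Nat.le_induction with
  | base => nlinarith
  | succ n hn ih =>
    have : a + 1 < a ^ n := by
      calc a + 1 < a ^ 2 := by nlinarith
        _ ≤ a ^ n := Nat.pow_le_pow_right (by omega) hn
    rw [pow_succ]
    nlinarith

section

variable {α : ℕ}

theorem matchAt_append_iff {u : List (PSym α)} {v w : List (Fin α)} {i : ℕ} :
    MatchAt u (v ++ w) i ↔ MatchAt u v i ∧ MatchAt u w (i + v.length) := by
  simp only [MatchAt, List.length_append]
  constructor
  · rintro ⟨hlen, h⟩
    refine ⟨⟨by omega, fun j hj => ?_⟩, ⟨by omega, fun j hj => ?_⟩⟩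
    · simpa [List.getElem?_append_left hj] using h j (by omega)
    · simpa [add_assoc, List.getElem?_append_right] using h (v.length + j) (by omega)
  · rintro ⟨⟨-, hv⟩, ⟨hlen, hw⟩⟩
    refine ⟨by omega, fun j hj => ?_⟩
    rcases lt_or_ge j v.length with hj' | hj'
    · simpa [List.getElem?_append_left hj'] using hv j hj'
    · obtain ⟨k, rfl⟩ := Nat.exists_eq_add_of_le hj'
      simpa [add_assoc, List.getElem?_append_right] using hw k (by omega)

theorem matchAt_singleton_iff {u : List (PSym α)} {c : Fin α} {i : ℕ} :
    MatchAt u [c] i ↔ u[i]? = some none ∨ u[i]? = some (some c) := by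
  simp only [MatchAt, List.length_singleton, Nat.lt_one_iff, forall_eq, add_zero]
  constructor
  · exact fun h => by simpa using h.2
  · intro h
    refine ⟨?_, by simpa using h⟩
    obtain ⟨x, hx⟩ : ∃ x, u[i]? = some x := by rcases h with h | h <;> exact ⟨_, h⟩
    exact (List.getElem?_eq_some_iff.1 hx).1

theorem matchAt_cons_iff {u : List (PSym α)} {c : Fin α} {v : List (Fin α)} {i : ℕ} :
    MatchAt u (c :: v) i ↔ MatchAt u [c] i ∧ MatchAt u v (i + 1) :=
  matchAt_append_iff (v := [c])

theorem exists_matchAt {u : List (PSym α)} (hα : 0 < α) {i k : ℕ} (h : i + k ≤ u.length) :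
    ∃ v : List (Fin α), v.length = k ∧ MatchAt u v i := by
  refine ⟨List.ofFn fun j : Fin k => (u[i + j]'(by omega)).getD ⟨0, hα⟩, by simp,
    by simpa using h, fun j hj => ?_⟩
  simp only [List.length_ofFn] at hj
  rw [List.getElem?_eq_getElem (by omega), List.getElem?_ofFn, dif_pos hj]
  cases u[i + j] <;> simp

theorem matchAt_reverse {u : List (PSym α)} {v : List (Fin α)} {i : ℕ} (h : MatchAt u v i) :
    MatchAt u.reverse v.reverse (u.length - (i + v.length)) := by
  obtain ⟨hlen, hm⟩ := h
  refine ⟨by simp only [List.length_reverse]; omega, fun j hj => ?_⟩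
  rw [List.length_reverse] at hj
  rw [List.getElem?_reverse (by omega), List.getElem?_reverse hj,
    show u.length - 1 - (u.length - (i + v.length) + j) = i + (v.length - 1 - j) by omega]
  exact hm _ (by omega)

theorem getElem?_eq_of_matchAt {u : List (PSym α)} {v w : List (Fin α)} {i j : ℕ}
    (hv : MatchAt u v i) (hw : MatchAt u w i) (hjv : j < v.length) (hjw : j < w.length)
    (hne : u[i + j]? ≠ some none) : v[j]? = w[j]? := by
  rcases hv.2 j hjv with h | h
  · exact absurd h hne
  rcases hw.2 j hjw with h' | h'
  · exact absurd h' hne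
  exact Option.map_injective (Option.some_injective _) (h.symm.trans h')

namespace IsLinearUpword

variable {n : ℕ} {u : List (PSym α)}

theorem eq_of_matchAt (hu : IsLinearUpword α n u) {v : List (Fin α)} (hv : v.length = n)
    {i j : ℕ} (hi : MatchAt u v i) (hj : MatchAt u v j) : i = j :=
  (hu v hv).unique hi hj

theorem reverse (hu : IsLinearUpword α n u) : IsLinearUpword α n u.reverse := by
  intro v hv
  obtain ⟨i, hi, huniq⟩ := hu v.reverse (by simp [hv])
  refine ⟨u.length - (i + n), by simpa [hv] using matchAt_reverse hi, fun j hj => ?_⟩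
  have hj' := matchAt_reverse hj
  rw [List.reverse_reverse, List.length_reverse, hv] at hj'
  have hi_le := hi.1
  have hj_le := hj.1
  simp only [List.length_reverse, hv] at hi_le hj_le
  have := huniq _ hj'
  omega

end IsLinearUpword

def DiamondOnlyAt (u : List (PSym α)) (p : ℕ) : Prop :=
  ∀ q : ℕ, u[q]? = some none ↔ q = p

namespace DiamondOnlyAt

variable {u : List (PSym α)} {p : ℕ}

theorem lt_length (hd : DiamondOnlyAt u p) : p < u.length :=
  (List.getElem?_eq_some_iff.1 ((hd p).2 rfl)).1

theorem reverse (hd : DiamondOnlyAt u p) : DiamondOnlyAt u.reverse (u.length - 1 - p) := by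
  have hp := hd.lt_length
  intro q
  rcases lt_or_ge q u.length with hq | hq
  · rw [List.getElem?_reverse hq, hd]
    omega
  · rw [List.getElem?_eq_none (by simpa using hq)]
    simp only [reduceCtorEq, false_iff]
    omega

theorem matchAt_singleton (hd : DiamondOnlyAt u p) (c : Fin α) : MatchAt u [c] p :=
  matchAt_singleton_iff.2 (Or.inl ((hd p).2 rfl))

theorem exists_getElem?_eq_some (hd : DiamondOnlyAt u p) {q : ℕ} (hq : q < u.length)
    (hqp : q ≠ p) : ∃ c, u[q]? = some (some c) := by
  rw [List.getElem?_eq_getElem hq]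
  cases h : u[q] with
  | none => exact absurd ((hd q).1 (by rw [List.getElem?_eq_getElem hq, h])) hqp
  | some c => exact ⟨c, rfl⟩

theorem eq_of_matchAt_singleton (hd : DiamondOnlyAt u p) {c c' : Fin α} (hne : c ≠ c') {q : ℕ}
    (h : MatchAt u [c] q) (h' : MatchAt u [c'] q) : q = p := by
  rw [matchAt_singleton_iff] at h h'
  rcases h with h | h
  · exact (hd q).1 h
  rcases h' with h' | h'
  · exact (hd q).1 h'
  exact absurd (by simpa [h] using h') hne

theorem pow_le_mul (hd : DiamondOnlyAt u p) {n : ℕ} (hu : IsLinearUpword α n u) :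
    α ^ n ≤ (u.length - n + 1) * (α + 1) := by
  choose f hf using fun v : List.Vector (Fin α) n => (hu v.toList v.toList_length).exists
  have hf_lt : ∀ v, f v < u.length - n + 1 := fun v => by
    have := (hf v).1
    rw [List.Vector.toList_length] at this
    omega
  let F : List.Vector (Fin α) n → Fin (u.length - n + 1) × Option (Fin α) :=
    fun v => (⟨f v, hf_lt v⟩, v.toList[p - f v]?)
  have hF : Function.Injective F := by
    intro v w hvw
    simp only [F, Prod.mk.injEq, Fin.mk.injEq] at hvw
    obtain ⟨hfvw, hdiamond⟩ := hvw
    apply List.Vector.toList_injective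
    apply List.ext_getElem?
    intro j
    rcases lt_or_ge j n with hj | hj
    · by_cases hjp : f v + j = p
      · rwa [← hfvw, show p - f v = j by omega] at hdiamond
      · refine getElem?_eq_of_matchAt (hf v) (hfvw ▸ hf w) (by simpa) (by simpa) ?_
        exact fun h => hjp ((hd _).1 h)
    · rw [List.getElem?_eq_none (by simpa), List.getElem?_eq_none (by simpa)]
  simpa using Fintype.card_le_of_injective F hF

variable {v : List (Fin α)}

theorem matchAt_eq_zero_or_eq_add_one (hd : DiamondOnlyAt u p)
    (hu : IsLinearUpword α (v.length + 1) u) (hp : MatchAt u v (p + 1)) {i : ℕ}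
    (hi : MatchAt u v i) : i = 0 ∨ i = p + 1 := by
  rcases i with _ | k
  · exact Or.inl rfl
  refine Or.inr (congrArg (· + 1) ?_)
  by_contra hkp
  obtain ⟨c, hc⟩ := hd.exists_getElem?_eq_some (q := k) (by have := hi.1; omega) hkp
  exact hkp (hu.eq_of_matchAt (v := c :: v) rfl
    (matchAt_cons_iff.2 ⟨matchAt_singleton_iff.2 (Or.inr hc), hi⟩)
    (matchAt_cons_iff.2 ⟨hd.matchAt_singleton c, hp⟩))

theorem eq_length_of_matchAt_add_one (hα : 3 ≤ α) (hd : DiamondOnlyAt u p)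
    (hu : IsLinearUpword α (v.length + 1) u) (hp : MatchAt u v (p + 1)) :
    p = v.length ∧ MatchAt u v 0 := by
  have hext : ∀ c : Fin α, ∃ i, (i = 0 ∨ i = p + 1) ∧ MatchAt u (v ++ [c]) i := fun c => by
    obtain ⟨i, hi, -⟩ := hu (v ++ [c]) (by simp)
    exact ⟨i, hd.matchAt_eq_zero_or_eq_add_one hu hp (matchAt_append_iff.1 hi).1, hi⟩
  choose f hf0 hf using hext
  obtain ⟨c, -, c', -, hne, hcc'⟩ := Finset.exists_ne_map_eq_of_card_lt_of_maps_to
    (s := Finset.univ) (t := {0, p + 1}) (f := f)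
    (by grw [Finset.card_le_two]; simpa using (by omega : 2 < α))
    (fun c _ => by simpa using hf0 c)
  have hlast : f c + v.length = p := hd.eq_of_matchAt_singleton hne
    (matchAt_append_iff.1 (hf c)).2 (hcc' ▸ (matchAt_append_iff.1 (hf c')).2)
  rcases hf0 c with h | h
  · exact ⟨by omega, h ▸ (matchAt_append_iff.1 (hf c)).1⟩
  · omega

theorem not_isLinearUpword_of_add_le (hα : 3 ≤ α) (hd : DiamondOnlyAt u p) {n : ℕ}
    (hn : 0 < n) (hpn : p + n ≤ u.length) (hn_le : 2 * n ≤ u.length) :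
    ¬ IsLinearUpword α n u := by
  intro hu
  obtain ⟨v, hv, hvp⟩ := exists_matchAt (u := u) (i := p + 1) (k := n - 1) (by omega) (by omega)
  obtain rfl : n = v.length + 1 := by omega
  obtain ⟨rfl, hv0⟩ := hd.eq_length_of_matchAt_add_one hα hu hvp
  obtain ⟨e, he⟩ :=
    hd.exists_getElem?_eq_some (q := v.length + 1 + v.length) (by omega) (by omega)
  have := hu.eq_of_matchAt (v := v ++ [e]) (by simp)
    (matchAt_append_iff.2 ⟨hv0, by simpa using hd.matchAt_singleton e⟩)
    (matchAt_append_iff.2 ⟨hvp, matchAt_singleton_iff.2 (Or.inr he)⟩)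
  omega

end DiamondOnlyAt

end

/-- For any alphabet `A = {0,…,α-1}` with `α ≥ 3` and any `n ≥ 2`,
there is no linear universal partial word for `A^n` containing exactly one `◊`. -/
theorem no_upword_single_diamond_nonbinary (α n : ℕ) (hα : 3 ≤ α) (hn : 2 ≤ n) :
    ¬ ∃ u : List (PSym α), IsLinearUpword α n u ∧ u.count (none : PSym α) = 1 := by
  rintro ⟨u, hu, hcount⟩
  obtain ⟨p, hd⟩ : ∃ p, DiamondOnlyAt u p :=
    List.exists_getElem?_eq_some_iff_of_count_eq_one hcount
  have hp_lt := hd.lt_length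
  rcases le_or_gt u.length (2 * n - 1) with hshort | hlong
  · refine (hd.pow_le_mul hu).not_gt ?_
    calc (u.length - n + 1) * (α + 1) ≤ n * (α + 1) := Nat.mul_le_mul_right _ (by omega)
      _ < α ^ n := Nat.mul_add_one_lt_pow hα hn
  · by_cases hpn : p + n ≤ u.length
    · exact hd.not_isLinearUpword_of_add_le hα (by omega) hpn (by omega) hu
    · exact hd.reverse.not_isLinearUpword_of_add_le hα (by omega)
        (by rw [List.length_reverse]; omega) (by rw [List.length_reverse]; omega) hu.reverse
end

section
/- For the binary alphabet A = {0,1} and n = 3, there is no linear universal partial word for A^3 with a single ◊ at position 4, i.e., no word of the form u_1 u_2 u_3 ◊ u_5 u_6 u_7 with u_i ∈ {0,1} is a linear upword for A^3. -/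
instance {α : ℕ} (u : List (PSym α)) (v : List (Fin α)) (i : ℕ) :
    Decidable (MatchAt u v i) := by
  unfold MatchAt; exact inferInstance

lemma exists_unique_fin5 (u : List (PSym 2)) (hu : u.length = 7)
    (h : IsLinearUpword 2 3 u) (a b c : Fin 2) :
    ∃ i : Fin 5, MatchAt u [a, b, c] i.val ∧
      ∀ j : Fin 5, MatchAt u [a, b, c] j.val → j = i := by
  obtain ⟨i, hi, huniq⟩ := h [a, b, c] rfl
  have hlt : i < 5 := by
    have h1 := hi.1
    simp [hu] at h1
    omega
  exact ⟨⟨i, hlt⟩, hi, fun j hj => Fin.ext (huniq j.val hj)⟩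

lemma check : ∀ (a b c d e f : Fin 2),
    ¬ ∀ p q r : Fin 2, ∃ i : Fin 5,
      MatchAt (([a, b, c].map some ++ [none] ++ [d, e, f].map some) : List (PSym 2))
        [p, q, r] i.val ∧
      ∀ j : Fin 5,
        MatchAt (([a, b, c].map some ++ [none] ++ [d, e, f].map some) : List (PSym 2))
          [p, q, r] j.val → j = i := by decide

/-- For `A = {0,1}` and `n = 3`, no word of the form
`u₁u₂u₃ ◊ u₅u₆u₇` with all `uᵢ ∈ {0,1}` is a linear upword for `A^3`. -/
theorem no_upword_n3_diamond_at_4 (x y : List (Fin 2))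
    (hx : x.length = 3) (hy : y.length = 3) :
    ¬ IsLinearUpword 2 3 (x.map some ++ [none] ++ y.map some) := by
  obtain ⟨a, b, c, rfl⟩ := List.length_eq_three.mp hx
  obtain ⟨d, e, f, rfl⟩ := List.length_eq_three.mp hy
  intro h
  refine check a b c d e f fun p q r => ?_
  exact exists_unique_fin5 _ (by simp) h p q r
end

section
/- For A = {0,1} and any n ≥ 2, there exists a linear universal partial word for A^n with exactly one ◊, located at the first position, which begins with ◊ 0^{n-1} 1. -/
/-!
A binary de Bruijn sequence of order `n` is a `2^n`-periodic sequence whose `2^n` windows of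
length `n` are pairwise distinct, hence exhaust `{0,1}^n`. They exist for every `n` by Lempel's
lifting. A window of length `n + 1` of the prefix sums `s` of a de Bruijn sequence `f` of order
`n` is determined, up to complement, by the window of length `n` of `f` at the same place, so
the windows of `s` starting in one period and their complements are `2^(n+1)` distinct words.
If `f` has odd weight over a period, then `s (k + 2^n) = s k + 1` and `s` is itself de Bruijn of
order `n + 1`; otherwise `s` and `s + 1` are two disjoint cycles of length `2^n`, and they can be
joined where `f` reads `1^n`, because there `s` and `s + 1` share a window of length `n`.

Rotate a de Bruijn sequence `f` of order `n` so that `0^n` starts at position `0`. Then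
`◊ f(1) f(2) ⋯ f(2^n + n - 3)` is the required upword: the factor `◊ 0^(n-1)` at position `0`
covers exactly the windows `0^n` and `1 0^(n-1)` of `f` (at `0` and `2^n - 1`), and the
positions `1, …, 2^n - 2` carry every other window once.
-/

open Finset Function

theorem Function.Periodic.apply_eq_of_modEq {α : Type*} {f : ℕ → α} {N a b : ℕ}
    (h : Periodic f N) (hab : a ≡ b [MOD N]) : f a = f b := by
  rw [← h.map_mod_nat a, ← h.map_mod_nat b, hab]

theorem Nat.ModEq.eq_or_eq_add_or_eq_add {N a b : ℕ} (h : a ≡ b [MOD N]) (ha : a < 2 * N)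
    (hb : b < 2 * N) : a = b ∨ a = b + N ∨ b = a + N := by
  have hN : 0 < N := by omega
  have ha' : a / N < 2 := (Nat.div_lt_iff_lt_mul hN).2 (by omega)
  have hb' : b / N < 2 := (Nat.div_lt_iff_lt_mul hN).2 (by omega)
  have := Nat.div_add_mod a N
  have := Nat.div_add_mod b N
  unfold Nat.ModEq at h
  interval_cases a / N <;> interval_cases b / N <;> omega

namespace Upword

def window {α : Type*} (f : ℕ → α) (n k : ℕ) : Fin n → α := fun j => f (k + j)

theorem window_eq_iff {α : Type*} {f : ℕ → α} {n a b : ℕ} :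
    window f n a = window f n b ↔ ∀ j < n, f (a + j) = f (b + j) := by
  simp [window, funext_iff, Fin.forall_iff]

theorem window_eq_of_modEq {α : Type*} {f : ℕ → α} {N n a b : ℕ} (h : Periodic f N)
    (hab : a ≡ b [MOD N]) : window f n a = window f n b :=
  funext fun j => h.apply_eq_of_modEq (hab.add_right j)

structure IsDeBruijn (n : ℕ) (f : ℕ → Fin 2) : Prop where
  periodic : Periodic f (2 ^ n)
  injOn_window : Set.InjOn (window f n) (Set.Iio (2 ^ n))

theorem isDeBruijn_zero : IsDeBruijn 0 fun _ => 0 where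
  periodic _ := rfl
  injOn_window a ha b hb _ := by simp_all

def prefixSum {M : Type*} [AddCommMonoid M] (f : ℕ → M) (k : ℕ) : M := ∑ i ∈ range k, f i

section prefixSum

variable {M : Type*} [AddCommMonoid M] {f : ℕ → M}

theorem prefixSum_succ (f : ℕ → M) (k : ℕ) : prefixSum f (k + 1) = prefixSum f k + f k :=
  sum_range_succ f k

theorem prefixSum_add_period {N : ℕ} (h : Periodic f N) (k : ℕ) :
    prefixSum f (k + N) = prefixSum f k + prefixSum f N := by
  rw [prefixSum, add_comm k N, sum_range_add, add_comm]
  simp only [prefixSum, add_comm N, h _]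

theorem periodic_prefixSum {N : ℕ} (h : Periodic f N) (h0 : prefixSum f N = 0) :
    Periodic (prefixSum f) N := fun k => by
  rw [prefixSum_add_period h, h0, add_zero]

end prefixSum

theorem window_eq_of_prefixSum_eq_add {M : Type*} [AddCommGroup M] {f : ℕ → M} {n a b : ℕ}
    {c : M} (h : ∀ j ≤ n, prefixSum f (a + j) = prefixSum f (b + j) + c) :
    window f n a = window f n b := by
  funext j
  have h₁ := h (j + 1) j.isLt
  rw [← add_assoc, ← add_assoc, prefixSum_succ, prefixSum_succ, h j j.isLt.le] at h₁
  exact add_left_cancel (add_right_cancel (by rwa [add_right_comm] at h₁))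

def joinCycles {α : Type*} (s t : ℕ → α) (N p q k : ℕ) : α :=
  if k % (2 * N) < N then s (p + k % (2 * N)) else t (q + k % (2 * N))

theorem periodic_joinCycles {α : Type*} (s t : ℕ → α) (N p q : ℕ) :
    Periodic (joinCycles s t N p q) (2 * N) :=
  fun k => by simp only [joinCycles, Nat.add_mod_right]

-- A window of length `n + 1` crossing a seam still reads its own block, because `s` read from
-- `p` and `t` read from `q` agree on their first `n` letters.
theorem joinCycles_add {α : Type*} {s t : ℕ → α} {N n p q k j : ℕ} (hs : Periodic s N)
    (ht : Periodic t N) (hst : ∀ i < n, s (p + i) = t (q + i)) (hnN : n ≤ N) (hk : k < 2 * N)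
    (hj : j ≤ n) :
    joinCycles s t N p q (k + j) = if k < N then s (p + k + j) else t (q + k + j) := by
  unfold joinCycles
  rcases lt_or_ge (k + j) (2 * N) with hkj | hkj
  · rw [Nat.mod_eq_of_lt hkj]
    split_ifs with h₁ h₂ h₂
    · rw [add_assoc]
    · omega
    · rw [show q + (k + j) = q + (k + j - N) + N by omega,
        show p + k + j = p + (k + j - N) + N by omega, hs, ht, hst _ (by omega)]
    · rw [add_assoc]
  · rw [Nat.mod_eq_sub_mod hkj, Nat.mod_eq_of_lt (by omega), if_pos (by omega),
      if_neg (by omega), hst _ (by omega),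
      show q + k + j = q + (k + j - 2 * N) + N + N by omega, ht, ht]

namespace IsDeBruijn

variable {n : ℕ} {f : ℕ → Fin 2}

theorem modEq_of_window_eq (hf : IsDeBruijn n f) {a b : ℕ}
    (h : window f n a = window f n b) : a ≡ b [MOD 2 ^ n] := by
  have hN : 0 < 2 ^ n := by positivity
  refine hf.injOn_window (Nat.mod_lt a hN) (Nat.mod_lt b hN) ?_
  rwa [window_eq_of_modEq hf.periodic (Nat.mod_modEq a _),
    window_eq_of_modEq hf.periodic (Nat.mod_modEq b _)]

theorem exists_window_eq (hf : IsDeBruijn n f) (w : Fin n → Fin 2) :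
    ∃ k < 2 ^ n, window f n k = w := by
  have hinj : Injective fun k : Fin (2 ^ n) => window f n k :=
    fun a b h => Fin.ext (hf.injOn_window a.isLt b.isLt h)
  obtain ⟨k, hk⟩ := ((Fintype.bijective_iff_injective_and_card _).2 ⟨hinj, by simp⟩).2 w
  exact ⟨k, k.isLt, hk⟩

theorem comp_add (hf : IsDeBruijn n f) (c : ℕ) : IsDeBruijn n fun k => f (c + k) where
  periodic k := by simp only [← add_assoc, hf.periodic (c + k)]
  injOn_window a ha b hb h := by
    have : window f n (c + a) = window f n (c + b) := by
      funext j
      simpa [window, add_assoc] using congrFun h j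
    exact ((hf.modEq_of_window_eq this).add_left_cancel' c).eq_of_lt_of_lt ha hb

theorem modEq_of_prefixSum_eq (hf : IsDeBruijn n f) {a b : ℕ}
    (h : ∀ j ≤ n, prefixSum f (a + j) = prefixSum f (b + j)) : a ≡ b [MOD 2 ^ n] :=
  hf.modEq_of_window_eq <|
    window_eq_of_prefixSum_eq_add (c := 0) fun j hj => by rw [h j hj, add_zero]

theorem prefixSum_of_sum_eq_one (hf : IsDeBruijn n f) (h1 : prefixSum f (2 ^ n) = 1) :
    IsDeBruijn (n + 1) (prefixSum f) where
  periodic k := by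
    rw [pow_succ, mul_two, ← add_assoc, prefixSum_add_period hf.periodic,
      prefixSum_add_period hf.periodic, h1, add_assoc, (by decide : (1 : Fin 2) + 1 = 0),
      add_zero]
  injOn_window a ha b hb hab := by
    have hs : ∀ j ≤ n, prefixSum f (a + j) = prefixSum f (b + j) := fun j hj => by
      simpa [window] using congrFun hab ⟨j, by omega⟩
    have hs0 := hs 0 n.zero_le
    simp only [Set.mem_Iio, pow_succ, mul_comm _ 2] at ha hb
    rcases (hf.modEq_of_prefixSum_eq hs).eq_or_eq_add_or_eq_add ha hb with h | rfl | rfl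
    · exact h
    all_goals simp only [add_zero, prefixSum_add_period hf.periodic, h1] at hs0; omega

theorem not_prefixSum_eq_add_one (hf : IsDeBruijn n f) (h0 : prefixSum f (2 ^ n) = 0)
    {a b : ℕ} : ¬∀ j ≤ n, prefixSum f (a + j) = prefixSum f (b + j) + 1 := fun h => by
  have hab := h 0 n.zero_le
  rw [add_zero, add_zero, (periodic_prefixSum hf.periodic h0).apply_eq_of_modEq
    (hf.modEq_of_window_eq (window_eq_of_prefixSum_eq_add h))] at hab
  omega

theorem joinCycles_prefixSum (hf : IsDeBruijn n f) (h0 : prefixSum f (2 ^ n) = 0) {p q : ℕ}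
    (hpq : ∀ i < n, prefixSum f (p + i) = prefixSum f (q + i) + 1) :
    IsDeBruijn (n + 1) (joinCycles (prefixSum f) (prefixSum f · + 1) (2 ^ n) p q) where
  periodic := by rw [pow_succ, mul_comm]; exact periodic_joinCycles _ _ _ _ _
  injOn_window a ha b hb hab := by
    simp only [Set.mem_Iio, pow_succ, mul_comm _ 2] at ha hb
    have hs := periodic_prefixSum hf.periodic h0
    have hs' : Periodic (prefixSum f · + 1) (2 ^ n) := fun k => by simp only [hs k]
    have hwin : ∀ j ≤ n,
        (if a < 2 ^ n then prefixSum f (p + a + j) else prefixSum f (q + a + j) + 1) =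
          if b < 2 ^ n then prefixSum f (p + b + j) else prefixSum f (q + b + j) + 1 := by
      intro j hj
      have hnN : n ≤ 2 ^ n := n.lt_two_pow_self.le
      rw [← joinCycles_add hs hs' hpq hnN ha hj, ← joinCycles_add hs hs' hpq hnN hb hj]
      exact congrFun hab ⟨j, by omega⟩
    split_ifs at hwin
    · rcases ((hf.modEq_of_prefixSum_eq hwin).add_left_cancel' p).eq_or_eq_add_or_eq_add ha hb
        with h | h | h <;> omega
    · exact absurd hwin (hf.not_prefixSum_eq_add_one h0)
    · exact absurd (fun j hj => (hwin j hj).symm) (hf.not_prefixSum_eq_add_one h0)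
    · rcases ((hf.modEq_of_prefixSum_eq fun j hj => add_right_cancel (hwin j hj)).add_left_cancel'
        q).eq_or_eq_add_or_eq_add ha hb with h | h | h <;> omega

end IsDeBruijn

theorem exists_isDeBruijn (n : ℕ) : ∃ f, IsDeBruijn n f := by
  induction n with
  | zero => exact ⟨_, isDeBruijn_zero⟩
  | succ n ih =>
    obtain ⟨f, hf⟩ := ih
    obtain h | h : prefixSum f (2 ^ n) = 0 ∨ prefixSum f (2 ^ n) = 1 := by omega
    · obtain ⟨m, -, hm⟩ := hf.exists_window_eq 1
      refine ⟨_, hf.joinCycles_prefixSum h (p := m + 1) (q := m) fun i hi => ?_⟩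
      rw [add_right_comm, prefixSum_succ, show f (m + i) = 1 from congrFun hm ⟨i, hi⟩]
    · exact ⟨_, hf.prefixSum_of_sum_eq_one h⟩

theorem exists_isDeBruijn_zeros (n : ℕ) : ∃ f, IsDeBruijn n f ∧ ∀ j < n, f j = 0 := by
  obtain ⟨f, hf⟩ := exists_isDeBruijn n
  obtain ⟨m, -, hm⟩ := hf.exists_window_eq 0
  exact ⟨_, hf.comp_add m, fun j hj => congrFun hm ⟨j, hj⟩⟩

def diamondWord {α : ℕ} (f : ℕ → Fin α) (L : ℕ) : List (PSym α) :=
  none :: (List.range L).map fun t => some (f (t + 1))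

section diamondWord

variable {α : ℕ} (f : ℕ → Fin α) (L : ℕ)

theorem count_none_diamondWord : (diamondWord f L).count none = 1 := by
  simp [diamondWord, List.count_eq_zero]

theorem matchAt_diamondWord_iff {v : List (Fin α)} {i : ℕ} :
    MatchAt (diamondWord f L) v i ↔
      i + v.length ≤ L + 1 ∧ ∀ j < v.length, 0 < i + j → v[j]? = some (f (i + j)) := by
  have hlength : (diamondWord f L).length = L + 1 := by simp [diamondWord]
  unfold MatchAt
  rw [hlength]
  refine and_congr_right fun hlen => forall₂_congr fun j hj => ?_
  rcases Nat.eq_zero_or_pos (i + j) with h | h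
  · simp [h, diamondWord]
  · obtain ⟨t, ht⟩ : ∃ t, i + j = t + 1 := ⟨i + j - 1, by omega⟩
    simp [ht, diamondWord, List.getElem?_range (show t < L by omega)]

end diamondWord

theorem prefix_diamondWord (f : ℕ → Fin 2) (L : ℕ) {n : ℕ} (hn : 1 ≤ n) (hL : n ≤ L)
    (h0 : ∀ j < n - 1, f (j + 1) = 0) (h1 : f n = 1) :
    none :: (List.replicate (n - 1) (some 0) ++ [some 1]) <+: diamondWord f L := by
  obtain ⟨k, rfl⟩ : ∃ k, n = k + 1 := ⟨n - 1, by omega⟩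
  have hword : List.replicate k (some 0) ++ [some 1] =
      (List.range (k + 1)).map fun t => some (f (t + 1)) := by
    rw [List.range_succ, List.map_append, List.map_singleton, h1]
    congr 1
    exact (List.eq_replicate_iff.2 ⟨by simp, by simp_all⟩).symm
  rw [diamondWord, List.cons_prefix_cons, Nat.add_sub_cancel, hword]
  refine ⟨rfl, List.IsPrefix.map _ ?_⟩
  simpa [List.take_range, min_eq_left hL] using List.take_prefix (k + 1) (List.range L)

namespace IsDeBruijn

variable {n : ℕ} {f : ℕ → Fin 2}

theorem exists_ofFn_window_eq (hf : IsDeBruijn n f) {v : List (Fin 2)} (hv : v.length = n) :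
    ∃ m < 2 ^ n, List.ofFn (window f n m) = v := by
  subst hv
  obtain ⟨m, hm, hw⟩ := hf.exists_window_eq fun j => v[j]
  exact ⟨m, hm, by simp [hw]⟩

theorem modEq_zero_of_window_eq_zero (hf : IsDeBruijn n f) (h0 : ∀ j < n, f j = 0) {k : ℕ}
    (hk : ∀ j < n, f (k + j) = 0) : k ≡ 0 [MOD 2 ^ n] :=
  hf.modEq_of_window_eq (funext fun j => by simp [window, hk j j.isLt, h0 j j.isLt])

theorem apply_two_pow_sub_one_add (hf : IsDeBruijn n f) (h0 : ∀ j < n, f j = 0) {j : ℕ}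
    (hj₀ : 0 < j) (hjn : j < n) : f (2 ^ n - 1 + j) = 0 := by
  rw [show 2 ^ n - 1 + j = j - 1 + 2 ^ n by have := Nat.one_le_two_pow (n := n); omega,
    hf.periodic, h0 _ (by omega)]

theorem apply_eq_one (hf : IsDeBruijn n f) (h0 : ∀ j < n, f j = 0) (hn : 1 ≤ n) : f n = 1 := by
  by_contra h
  have h1 := hf.modEq_zero_of_window_eq_zero h0 (k := 1) fun j hj => by
    rcases lt_or_ge (j + 1) n with hj' | hj'
    · rw [add_comm, h0 _ hj']
    · rw [show 1 + j = n by omega]; omega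
  have := h1.eq_of_lt_of_lt (Nat.one_lt_two_pow (by omega)) (by positivity)
  omega

theorem apply_two_pow_sub_one (hf : IsDeBruijn n f) (h0 : ∀ j < n, f j = 0) (hn : 1 ≤ n) :
    f (2 ^ n - 1) = 1 := by
  by_contra h
  have h1 := hf.modEq_zero_of_window_eq_zero h0 (k := 2 ^ n - 1) fun j hj => by
    rcases Nat.eq_zero_or_pos j with rfl | hj₀
    · rw [add_zero]; omega
    · exact hf.apply_two_pow_sub_one_add h0 hj₀ hj
  have := Nat.one_lt_two_pow (n := n) (by omega)
  have := h1.eq_of_lt_of_lt (by omega) (by positivity)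
  omega

theorem tail_window_eq_zero_iff (hf : IsDeBruijn n f) (h0 : ∀ j < n, f j = 0) (hn : 1 ≤ n)
    {m : ℕ} (hm : m < 2 ^ n) :
    (∀ j < n, 0 < j → f (m + j) = 0) ↔ m = 0 ∨ m = 2 ^ n - 1 := by
  constructor
  · intro h
    rcases (show f m = 0 ∨ f m = 1 by omega) with hm0 | hm1
    · left
      refine (hf.modEq_zero_of_window_eq_zero h0 fun j hj => ?_).eq_of_lt_of_lt hm (by positivity)
      rcases Nat.eq_zero_or_pos j with rfl | hj₀
      · exact hm0
      · exact h j hj hj₀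
    · right
      refine (hf.modEq_of_window_eq (funext fun j => ?_)).eq_of_lt_of_lt hm (by omega)
      rcases Nat.eq_zero_or_pos (j : ℕ) with hj | hj₀
      · simp [window, hj, hm1, hf.apply_two_pow_sub_one h0 hn]
      · simp [window, h j j.isLt hj₀, hf.apply_two_pow_sub_one_add h0 hj₀ j.isLt]
  · rintro (rfl | rfl) j hjn hj₀
    · rw [zero_add, h0 j hjn]
    · exact hf.apply_two_pow_sub_one_add h0 hj₀ hjn

theorem matchAt_diamondWord_ofFn_window_iff (hf : IsDeBruijn n f) (h0 : ∀ j < n, f j = 0)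
    (hn : 1 ≤ n) {m i : ℕ} (hm : m < 2 ^ n) :
    MatchAt (diamondWord f (2 ^ n + n - 3)) (List.ofFn (window f n m)) i ↔
      i = if m = 0 ∨ m = 2 ^ n - 1 then 0 else m := by
  have hN := Nat.one_lt_two_pow (n := n) (by omega)
  simp +contextual only [matchAt_diamondWord_iff, List.length_ofFn, List.getElem?_ofFn, window,
    dite_true, Option.some.injEq]
  rcases Nat.eq_zero_or_pos i with rfl | hi
  · simp +contextual only [zero_add, h0, show n ≤ 2 ^ n + n - 3 + 1 by omega, true_and]
    rw [hf.tail_window_eq_zero_iff h0 hn hm]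
    split_ifs <;> omega
  · simp only [show ∀ j, 0 < i + j by omega, forall_const]
    rw [and_congr_right fun hlen => window_eq_iff.symm.trans
      (hf.injOn_window.eq_iff hm (show i < 2 ^ n by omega))]
    split_ifs <;> omega

theorem isLinearUpword_diamondWord (hf : IsDeBruijn n f) (h0 : ∀ j < n, f j = 0) (hn : 1 ≤ n) :
    IsLinearUpword 2 n (diamondWord f (2 ^ n + n - 3)) := by
  intro v hv
  obtain ⟨m, hm, rfl⟩ := hf.exists_ofFn_window_eq hv
  exact ⟨_, (hf.matchAt_diamondWord_ofFn_window_iff h0 hn hm).2 rfl,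
    fun i hi => (hf.matchAt_diamondWord_ofFn_window_iff h0 hn hm).1 hi⟩

end IsDeBruijn

end Upword

/-- For `A = {0,1}` and any `n ≥ 2`, there exists a linear upword for `A^n`
with exactly one `◊`, located at the first position, which begins with `◊ 0^{n-1} 1`. -/
theorem upword_diamond_at_pos_1 (n : ℕ) (hn : 2 ≤ n) :
    ∃ u : List (PSym 2), IsLinearUpword 2 n u ∧ u.count (none : PSym 2) = 1 ∧
      (none :: (List.replicate (n - 1) (some (0 : Fin 2)) ++ [some (1 : Fin 2)])) <+: u := by
  obtain ⟨f, hf, h0⟩ := Upword.exists_isDeBruijn_zeros n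
  have h4 : 4 ≤ 2 ^ n := by simpa using Nat.pow_le_pow_right two_pos hn
  exact ⟨_, hf.isLinearUpword_diamondWord h0 (by omega), Upword.count_none_diamondWord f _,
    Upword.prefix_diamondWord f _ (by omega) (by omega) (fun j hj => h0 _ (by omega))
      (hf.apply_eq_one h0 (by omega))⟩
end

section
/- Every linear universal partial word u = ◊ u_2 u_3 ⋯ u_N for A^n with A = {0,1}, n ≥ 2, and a single ◊ at the first position satisfies u_2 = u_3 = ⋯ = u_n and u_{n+1} = complement of u_n; i.e., up to permuting letters it begins with ◊ 0^{n-1} 1. -/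
private lemma fin2_ne_add_one : ∀ a : Fin 2, a ≠ a + 1 := by decide

private lemma matchAt_iff {u : List (PSym 2)} {g : ℕ → Fin 2} {n i : ℕ} :
    MatchAt u ((List.range n).map g) i ↔
      i + n ≤ u.length ∧ ∀ j < n, u[i+j]? = some none ∨ u[i+j]? = some (some (g j)) := by
  unfold MatchAt
  simp only [List.length_map, List.length_range]
  constructor
  · rintro ⟨h1, h2⟩
    refine ⟨h1, fun j hj => ?_⟩
    have := h2 j hj
    rwa [List.getElem?_map, List.getElem?_range hj] at this
  · rintro ⟨h1, h2⟩
    refine ⟨h1, fun j hj => ?_⟩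
    rw [List.getElem?_map, List.getElem?_range hj]
    exact h2 j hj

/-- Every linear upword `u = ◊ u₂u₃ ⋯ u_N` for `A^n`, `A = {0,1}`, `n ≥ 2`,
with a single `◊` at the first position satisfies `u₂ = u₃ = ⋯ = u_n` and `u_{n+1}` is the
complement of `u_n` (indices 1-based); i.e. up to permuting letters it begins with `◊ 0^{n-1} 1`. -/
theorem upword_diamond_first_forces_prefix (n : ℕ) (hn : 2 ≤ n)
    (u : List (PSym 2)) (hu : IsLinearUpword 2 n u)
    (h0 : u[0]? = some none) (hc : u.count (none : PSym 2) = 1) :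
    (∀ i, 2 ≤ i → i ≤ n → u[i - 1]? = u[1]?) ∧
    (∀ x : Fin 2, u[n - 1]? = some (some x) → ∃ y : Fin 2, y ≠ x ∧ u[n]? = some (some y)) := by
  classical
  -- positions ≥ 1 hold letters
  have hnone : ∀ k, 1 ≤ k → u[k]? ≠ some none := by
    intro k hk1 hknone
    have c1 : 0 < (u.take k).count (none : PSym 2) := by
      rw [List.count_pos_iff]
      have h : (u.take k)[0]? = some none := by
        rw [List.getElem?_take_of_lt hk1]; exact h0
      obtain ⟨hlt, he⟩ := List.getElem?_eq_some_iff.mp h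
      exact he ▸ List.getElem_mem hlt
    have c2 : 0 < (u.drop k).count (none : PSym 2) := by
      rw [List.count_pos_iff]
      have h : (u.drop k)[0]? = some none := by
        rw [List.getElem?_drop]; simpa using hknone
      obtain ⟨hlt, he⟩ := List.getElem?_eq_some_iff.mp h
      exact he ▸ List.getElem_mem hlt
    have hc2 : (u.take k).count (none : PSym 2) + (u.drop k).count (none : PSym 2) = 1 := by
      rw [← List.count_append, List.take_append_drop]; exact hc
    omega
  set f : ℕ → Fin 2 := fun k => ((u[k]?).bind id).getD 0 with hfdef
  have hf : ∀ k, 1 ≤ k → k < u.length → u[k]? = some (some (f k)) := by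
    intro k hk1 hkL
    obtain ⟨a, ha⟩ : ∃ a, u[k]? = some a := ⟨u[k], List.getElem?_eq_getElem hkL⟩
    match a, ha with
    | none, ha => exact absurd ha (hnone k hk1)
    | some c, ha => rw [ha]; simp [hfdef, ha]
  have hnL : n ≤ u.length := by
    obtain ⟨i, hi, -⟩ := hu ((List.range n).map fun _ => 0) (by simp)
    have := (matchAt_iff.mp hi).1
    omega
  have hf1 := hf 1 (le_refl 1) (by omega)
  have hnL' : n < u.length := by
    obtain ⟨i, hi, -⟩ := hu ((List.range n).map fun j => if j = 1 then f 1 + 1 else 0) (by simp)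
    obtain ⟨hlen, hm⟩ := matchAt_iff.mp hi
    rcases Nat.eq_zero_or_pos i with rfl | hpos
    · exfalso
      have h := hm 1 (by omega)
      rw [show (0:ℕ) + 1 = 1 by omega, if_pos rfl, hf1] at h
      rcases h with h | h
      · simp at h
      · simp only [Option.some.injEq] at h
        exact fin2_ne_add_one (f 1) h
    · omega
  -- the key word
  set g : ℕ → Fin 2 := fun j => if j = n - 1 then f n + 1 else f (j + 1) with hgdef
  obtain ⟨i, hi, -⟩ := hu ((List.range n).map g) (by simp)
  obtain ⟨hlen, hm⟩ := matchAt_iff.mp hi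
  have hi0 : i = 0 := by
    by_contra hne
    rcases eq_or_ne i 1 with rfl | h1
    · have h := hm (n-1) (by omega)
      rw [show 1 + (n-1) = n by omega, hf n (by omega) hnL'] at h
      rcases h with h | h
      · simp at h
      · simp only [hgdef, if_pos rfl, Option.some.injEq] at h
        exact fin2_ne_add_one (f n) h
    · have hi2 : 2 ≤ i := by omega
      set g' : ℕ → Fin 2 := fun j => if j = 0 then f (i-1) else g (j-1) with hg'
      obtain ⟨k, -, hk⟩ := hu ((List.range n).map g') (by simp)
      have m0 : MatchAt u ((List.range n).map g') 0 := by
        rw [matchAt_iff]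
        refine ⟨by omega, fun j hj => ?_⟩
        rcases Nat.eq_zero_or_pos j with rfl | hj1
        · left; simpa using h0
        · right
          rw [show (0:ℕ) + j = j by omega, hf j hj1 (by omega)]
          have hgg : g' j = f j := by
            simp only [hg', hgdef, if_neg (by omega : j ≠ 0),
              if_neg (by omega : j - 1 ≠ n - 1)]
            congr 1
            omega
          rw [hgg]
      have m1 : MatchAt u ((List.range n).map g') (i-1) := by
        rw [matchAt_iff]
        refine ⟨by omega, fun j hj => ?_⟩
        rcases Nat.eq_zero_or_pos j with rfl | hj1
        · right
          rw [show i - 1 + 0 = i - 1 by omega, hf (i-1) (by omega) (by omega)]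
          simp [hg']
        · have h := hm (j-1) (by omega)
          rw [show i + (j-1) = i - 1 + j by omega] at h
          have hgg : g' j = g (j-1) := by
            simp only [hg', if_neg (by omega : j ≠ 0)]
          rw [hgg]
          exact h
      have e0 := hk 0 m0
      have e1 := hk (i-1) m1
      omega
  subst hi0
  have key : ∀ j, 1 ≤ j → j < n → f j = g j := by
    intro j h1 h2
    have h := hm j h2
    rw [show (0:ℕ) + j = j by omega, hf j h1 (by omega)] at h
    rcases h with h | h
    · simp at h
    · simpa using h
  have hconst : ∀ j, 1 ≤ j → j ≤ n - 1 → f j = f 1 := by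
    intro j
    induction j with
    | zero => omega
    | succ m ih =>
      intro h1 h2
      rcases Nat.eq_zero_or_pos m with rfl | hm1
      · rfl
      · have hstep : f m = f (m + 1) := by
          have h := key m hm1 (by omega)
          have hg2 : g m = f (m + 1) := if_neg (by omega : m ≠ n - 1)
          rw [hg2] at h
          exact h
        rw [← hstep]
        exact ih hm1 (by omega)
  have hlast : f (n - 1) = f n + 1 := by
    have h := key (n-1) (by omega) (by omega)
    have hg1 : g (n - 1) = f n + 1 := if_pos rfl
    rw [hg1] at h
    exact h
  constructor
  · intro i hi2 hin
    rw [hf (i-1) (by omega) (by omega), hf1, hconst (i-1) (by omega) (by omega)]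
  · intro x hx
    have hx' : f (n - 1) = x := by
      rw [hf (n-1) (by omega) (by omega)] at hx
      simpa using hx
    refine ⟨f n, ?_, hf n (by omega) hnL'⟩
    rw [← hx', hlast]
    exact fin2_ne_add_one (f n)
end

section
/- Let u = u_1 u_2 ⋯ u_N be a cyclic universal partial word for A^n with A = {0,1,…,α-1} and n ≥ 2 (indices taken modulo N). If u_k = ◊ then u_{k+n} = ◊. -/
/-!
If `u_k = ◊` but `u_{k+n} = a` is a letter, complete `u_{k+1} ⋯ u_{k+n-1}` to a word `f` and pick a
letter `b ≠ a`. The word `f b` occurs at some position `q`, and `q ≠ k + 1` because of `a`. Completing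
`u_{q-1}` to a letter `c`, the word `c f` then occurs both at `q - 1` and, through the wildcard, at `k`;
by uniqueness `q - 1 = k`, a contradiction.
-/

variable {α : ℕ} {u : List (PSym α)}

theorem cycMatchAt_singleton {c : Fin α} {i : ℕ} :
    CycMatchAt u [c] i ↔ u[i % u.length]? = some none ∨ u[i % u.length]? = some (some c) := by
  simp [CycMatchAt]

theorem cycMatchAt_append {v w : List (Fin α)} {i : ℕ} :
    CycMatchAt u (v ++ w) i ↔ CycMatchAt u v i ∧ CycMatchAt u w (i + v.length) := by
  constructor
  · intro hvw
    refine ⟨fun j hj => ?_, fun j hj => ?_⟩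
    · simpa [List.getElem?_append_left hj] using hvw j (by simp; omega)
    · have := hvw (v.length + j) (by simp; omega)
      rwa [List.getElem?_append_right (by omega), Nat.add_sub_cancel_left, ← Nat.add_assoc] at this
  · rintro ⟨hv, hw⟩ j hj
    rcases lt_or_ge j v.length with hj' | hj'
    · rw [List.getElem?_append_left hj']
      exact hv j hj'
    · rw [List.getElem?_append_right hj']
      have := hw (j - v.length) (by simp at hj; omega)
      rwa [Nat.add_assoc, Nat.add_sub_cancel' hj'] at this

theorem cycMatchAt_cons {c : Fin α} {v : List (Fin α)} {i : ℕ} :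
    CycMatchAt u (c :: v) i ↔ CycMatchAt u [c] i ∧ CycMatchAt u v (i + 1) :=
  cycMatchAt_append (v := [c])

theorem CycMatchAt.of_modEq {v : List (Fin α)} {i j : ℕ} (h : CycMatchAt u v i)
    (hij : i ≡ j [MOD u.length]) : CycMatchAt u v j := by
  intro l hl
  rw [← hij.add_right l]
  exact h l hl

theorem exists_cycMatchAt_singleton [Nonempty (Fin α)] (hu : u ≠ []) (i : ℕ) :
    ∃ c, CycMatchAt u [c] i := by
  have hi : i % u.length < u.length := Nat.mod_lt _ (List.length_pos_of_ne_nil hu)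
  simp only [cycMatchAt_singleton, List.getElem?_eq_getElem hi, Option.some.injEq]
  cases u[i % u.length] with
  | none => exact ⟨Classical.arbitrary _, .inl rfl⟩
  | some c => exact ⟨c, .inr rfl⟩

theorem exists_cycMatchAt [Nonempty (Fin α)] (hu : u ≠ []) (i m : ℕ) :
    ∃ v : List (Fin α), v.length = m ∧ CycMatchAt u v i := by
  induction m generalizing i with
  | zero => exact ⟨[], rfl, fun j hj => absurd hj (Nat.not_lt_zero j)⟩
  | succ m ih =>
    obtain ⟨c, hc⟩ := exists_cycMatchAt_singleton hu i
    obtain ⟨v, hv, hvi⟩ := ih (i + 1)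
    exact ⟨c :: v, by simp [hv], cycMatchAt_cons.2 ⟨hc, hvi⟩⟩

theorem IsCyclicUpword.modEq_of_cycMatchAt {n : ℕ} (hu : IsCyclicUpword α n u) (hne : u ≠ [])
    {v : List (Fin α)} (hv : v.length = n) {i j : ℕ} (hi : CycMatchAt u v i)
    (hj : CycMatchAt u v j) : i ≡ j [MOD u.length] := by
  have hN := List.length_pos_of_ne_nil hne
  obtain ⟨p, -, hp⟩ := hu v hv
  exact (hp _ ⟨Nat.mod_lt i hN, hi.of_modEq (Nat.mod_modEq i _).symm⟩).trans
    (hp _ ⟨Nat.mod_lt j hN, hj.of_modEq (Nat.mod_modEq j _).symm⟩).symm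

theorem IsCyclicUpword.getElem?_add_eq_some_none [Nontrivial (Fin α)] {n : ℕ}
    (hu : IsCyclicUpword α n u) {k : ℕ} (h : u[k % u.length]? = some none) :
    u[(k + n) % u.length]? = some none := by
  obtain _ | m := n
  · simpa using h
  have hne : u ≠ [] := by rintro rfl; simp at h
  by_contra hdiam
  obtain ⟨a, ha⟩ : ∃ a, u[(k + (m + 1)) % u.length]? = some (some a) := by
    obtain ⟨a, ha⟩ := exists_cycMatchAt_singleton hne (k + (m + 1))
    exact ⟨a, (cycMatchAt_singleton.1 ha).resolve_left hdiam⟩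
  obtain ⟨b, hba⟩ := exists_ne a
  obtain ⟨f, hf, hfk⟩ := exists_cycMatchAt hne (k + 1) m
  obtain ⟨q, ⟨-, hq⟩, -⟩ := hu (f ++ [b]) (by simp [hf])
  obtain ⟨c, hc⟩ := exists_cycMatchAt_singleton hne (q + u.length - 1)
  have hprev : q + u.length - 1 + 1 ≡ q [MOD u.length] := by
    rw [Nat.sub_add_cancel ((List.length_pos_of_ne_nil hne).trans_le (Nat.le_add_left _ q)),
      Nat.ModEq, Nat.add_mod_right]
  have hkq : k ≡ q + u.length - 1 [MOD u.length] :=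
    hu.modEq_of_cycMatchAt hne (by simp [hf])
      (cycMatchAt_cons.2 ⟨cycMatchAt_singleton.2 (.inl h), hfk⟩)
      (cycMatchAt_cons.2 ⟨hc, (cycMatchAt_append.1 hq).1.of_modEq hprev.symm⟩)
  have hb := (cycMatchAt_append.1 (hq.of_modEq ((hkq.add_right 1).trans hprev).symm)).2
  rw [cycMatchAt_singleton, hf, Nat.add_assoc, Nat.add_comm 1 m, ha] at hb
  simp [hba.symm] at hb

theorem cyclic_upword_diamond_shift_general (α n : ℕ) (hα : 2 ≤ α)
    (u : List (PSym α)) (hu : IsCyclicUpword α n u)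
    (k : ℕ) (h : u[k]? = some none) :
    u[(k + n) % u.length]? = some none := by
  have : Nontrivial (Fin α) := Fin.nontrivial_iff_two_le.2 hα
  have hk : k % u.length = k := Nat.mod_eq_of_lt (List.getElem?_eq_some_iff.1 h).1
  exact hu.getElem?_add_eq_some_none (by rwa [hk])

/-- Let `u` be a cyclic upword for `A^n`, `A = {0,…,α-1}`, `n ≥ 2`
(indices modulo `u.length`). If `u_k = ◊` then `u_{k+n} = ◊`. -/
theorem cyclic_upword_diamond_shift (α n : ℕ) (hα : 2 ≤ α) (hn : 2 ≤ n)
    (u : List (PSym α)) (hu : IsCyclicUpword α n u)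
    (k : ℕ) (hk : k < u.length) (h : u[k]? = some none) :
    u[(k + n) % u.length]? = some none :=
  cyclic_upword_diamond_shift_general α n hα u hu k h
end

section
/- For A = {0,1} and any n ≥ 2, the word ◊^{n-1} 0 1^n (that is, n-1 wildcards followed by one 0 and then n ones) is a linear universal partial word for A^n with exactly n-1 many ◊s. -/
section Aux

variable (n : ℕ)

private def W (n : ℕ) : List (PSym 2) :=
  List.replicate (n - 1) (none : PSym 2) ++ [some (0 : Fin 2)] ++
    List.replicate n (some (1 : Fin 2))

private lemma W_length (hn : 2 ≤ n) : (W n).length = 2 * n := by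
  simp [W]; omega

private lemma W_get (hn : 2 ≤ n) (m : ℕ) :
    (W n)[m]? = if m < n - 1 then some none
      else if m = n - 1 then some (some 0)
      else if m < 2 * n then some (some 1) else none := by
  unfold W
  rcases lt_trichotomy m (n-1) with h | h | h
  · have h1 : m < (List.replicate (n-1) (none : PSym 2) ++ [some (0:Fin 2)]).length := by
      simp; omega
    have h2 : m < (List.replicate (n-1) (none : PSym 2)).length := by simp; omega
    rw [List.getElem?_append_left h1, List.getElem?_append_left h2, List.getElem?_replicate]
    simp [h]
  · subst h
    rw [List.getElem?_append_left
        (by simp only [List.length_append, List.length_replicate, List.length_cons,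
            List.length_nil]; omega),
        List.getElem?_append_right (by simp only [List.length_replicate]; exact le_refl _)]
    simp only [List.length_replicate, Nat.sub_self, List.getElem?_cons_zero]
    rw [if_neg (by omega)]
    simp
  · rw [List.getElem?_append_right
        (by simp only [List.length_append, List.length_replicate, List.length_cons,
            List.length_nil]; omega)]
    rw [List.getElem?_replicate]
    simp only [List.length_append, List.length_replicate, List.length_cons, List.length_nil]
    split_ifs with h1 h2 h3 <;> try rfl
    all_goals omega

private lemma fin2 (c : Fin 2) : c = 0 ∨ c = 1 := by
  rcases c with ⟨cv, hc⟩
  interval_cases cv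
  · left; rfl
  · right; rfl

private lemma match_iff (hn : 2 ≤ n) (v : List (Fin 2)) (hv : v.length = n) (i : ℕ) :
    MatchAt (W n) v i ↔ i ≤ n ∧
      (∀ j < n, i + j = n - 1 → v[j]? = some 0) ∧
      (∀ j < n, n ≤ i + j → v[j]? = some 1) := by
  constructor
  · rintro ⟨hlen, h⟩
    rw [W_length n hn] at hlen
    refine ⟨by omega, ?_, ?_⟩
    · intro j hj hij
      rcases h j (by omega) with h' | h'
      · rw [W_get n hn, if_neg (by omega), if_pos hij] at h'; simp at h'
      · rw [W_get n hn, if_neg (by omega), if_pos hij] at h'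
        rcases hx : v[j]? with _ | c
        · simp [hx] at h'
        · simp [hx] at h'; simp [hx, h']
    · intro j hj hij
      rcases h j (by omega) with h' | h'
      · rw [W_get n hn, if_neg (by omega), if_neg (by omega), if_pos (by omega)] at h'
        simp at h'
      · rw [W_get n hn, if_neg (by omega), if_neg (by omega), if_pos (by omega)] at h'
        rcases hx : v[j]? with _ | c
        · simp [hx] at h'
        · simp [hx] at h'; simp [hx, ← h']
  · rintro ⟨hi, h0, h1⟩
    refine ⟨by rw [W_length n hn]; omega, ?_⟩
    intro j hj
    rw [W_get n hn]
    rcases lt_trichotomy (i + j) (n - 1) with h | h | h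
    · left; rw [if_pos h]
    · right; rw [if_neg (by omega), if_pos h, h0 j (by omega) h]; rfl
    · right; rw [if_neg (by omega), if_neg (by omega), if_pos (by omega),
        h1 j (by omega) (by omega)]; rfl
end Aux
/-- For `A = {0,1}` and any `n ≥ 2`, the word `◊^{n-1} 0 1^n` is a linear
universal partial word for `A^n` with exactly `n-1` many `◊`s. -/
theorem upword_nm1_diamonds (n : ℕ) (hn : 2 ≤ n) :
    IsLinearUpword 2 n
      (List.replicate (n - 1) (none : PSym 2) ++ [some (0 : Fin 2)] ++
        List.replicate n (some (1 : Fin 2))) ∧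
    (List.replicate (n - 1) (none : PSym 2) ++ [some (0 : Fin 2)] ++
        List.replicate n (some (1 : Fin 2))).count (none : PSym 2) = n - 1 := by
  constructor
  · show IsLinearUpword 2 n (W n)
    intro v hv
    by_cases hall : ∀ j < n, v[j]? = some 1
    · refine ⟨n, ?_, ?_⟩
      · show MatchAt (W n) v n
        rw [match_iff n hn v hv]
        exact ⟨le_refl n, fun j hj hij => by omega, fun j hj _ => hall j hj⟩
      · intro i hi
        rw [match_iff n hn v hv] at hi
        obtain ⟨h1, h2, h3⟩ := hi
        by_contra hne
        have hi' : i < n := by omega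
        have hA : v[n - 1 - i]? = some 0 := h2 (n - 1 - i) (by omega) (by omega)
        have hB := hall (n - 1 - i) (by omega)
        rw [hA] at hB
        simp at hB
    · push_neg at hall
      obtain ⟨j₀, hj₀, hvj₀⟩ := hall
      have hP0 : v[j₀]? = some 0 := by
        have : j₀ < v.length := by omega
        rw [List.getElem?_eq_getElem this] at *
        rcases fin2 (v[j₀]) with h | h <;> simp [h] at *
      set k := Nat.findGreatest (fun j => v[j]? = some 0) (n - 1) with hk
      have hPk : v[k]? = some 0 :=
        Nat.findGreatest_spec (P := fun j => v[j]? = some 0) (show j₀ ≤ n - 1 by omega) hP0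
      have hkle : k ≤ n - 1 := Nat.findGreatest_le _
      have hones : ∀ j, k < j → j < n → v[j]? = some 1 := by
        intro j hkj hjn
        have hnot : ¬ v[j]? = some 0 :=
          Nat.findGreatest_is_greatest hkj (by omega)
        have : j < v.length := by omega
        rw [List.getElem?_eq_getElem this] at *
        rcases fin2 (v[j]) with h | h <;> simp [h] at *
      refine ⟨n - 1 - k, ?_, ?_⟩
      · show MatchAt (W n) v (n - 1 - k)
        rw [match_iff n hn v hv]
        refine ⟨by omega, ?_, ?_⟩
        · intro j hj hij
          have : j = k := by omega
          rwa [this]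
        · intro j hj hij
          exact hones j (by omega) hj
      · intro i hi
        rw [match_iff n hn v hv] at hi
        obtain ⟨h1, h2, h3⟩ := hi
        have hi' : i < n := by
          by_contra h
          have : i = n := by omega
          subst this
          have := h3 k (by omega) (by omega)
          rw [hPk] at this; simp at this
        have hj' : v[n - 1 - i]? = some 0 := h2 (n - 1 - i) (by omega) (by omega)
        rcases lt_trichotomy (n - 1 - i) k with h | h | h
        · have := h3 k (by omega) (by omega)
          rw [hPk] at this; simp at this
        · omega
        · have := hones (n - 1 - i) h (by omega)
          rw [hj'] at this; simp at this
  · show (W n).count (none : PSym 2) = n - 1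
    unfold W
    simp [List.count_append, List.count_replicate]
end
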